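/- arXiv:1009.2553 — 5 statements merged into one kernel-verified Lean document; each statement's English description precedes it below -/
import Mathlib

section
/- Let 1 ≤ n ≤ N and let ω be a Blaschke product of order n. Let B be the (N+1)×(N+1) lower triangular Toeplitz matrix B = (b_{j−k})_{j,k=0}^{N}, where b_m for m ≥ 0 is the m-th Taylor coefficient of ω at 0 and b_m = 0 for m < 0. Then the operator norm of B on ℂ^{N+1} with the Euclidean norm equals 1. -/
open MeasureTheory Complex Real AddCircle
open scoped Real

noncomputable section

instance : Fact (0 < 2 * π) := ⟨by positivity⟩

abbrev UnitCircle := AddCircle (2 * π)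

/-- The `(N+1) × (N+1)` Toeplitz matrix `(a_{j-k})_{j,k=0}^N`. -/
def toeplitz (N : ℕ) (a : ℤ → ℂ) : Matrix (Fin (N + 1)) (Fin (N + 1)) ℂ :=
  fun j k => a ((j : ℤ) - (k : ℤ))

/-- The operator norm of a matrix acting on `ℂ^n` with the Euclidean norm. -/
def opNorm {n : ℕ} (A : Matrix (Fin n) (Fin n) ℂ) : ℝ :=
  ‖Matrix.toEuclideanCLM (𝕜 := ℂ) A‖

/-- A Blaschke product of order `n` (a unimodular constant when `n = 0`). -/
def IsBlaschke (n : ℕ) (ω : ℂ → ℂ) : Prop :=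
  ∃ (l : ℂ) (z : Fin n → ℂ), ‖l‖ = 1 ∧ (∀ j, ‖z j‖ < 1) ∧
    ∀ w : ℂ, ω w = l * ∏ j, (w - z j) / (1 - (starRingEnd ℂ) (z j) * w)

/-!
Let `g` be the boundary function `t ↦ ω(e^{it})` of `ω`. Since `ω` is holomorphic on a disc of
radius `> 1`, its Taylor series converges absolutely on the unit circle, so the Fourier
coefficients of `g` are the Taylor coefficients of `ω` (and vanish at negative indices). Hence
`B = (ĝ(j - k))` is the compression of multiplication by `g` to polynomials of degree `≤ N`:
for `x ∈ ℂ^{N+1}` and `p = ∑ x_k z^k`, the vector `Bx` consists of the first `N + 1` Fourier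
coefficients of `g p`. Bessel's inequality and `|g| = 1` give
`‖Bx‖ ≤ ‖g p‖_{L²} = ‖p‖_{L²} = ‖x‖`. Conversely `ω = P / Q` with `P`, `Q` polynomials of
degree `n ≤ N` and `|P| = |Q|` on the circle; for `x` the coefficient vector of `Q`, `g Q = P`
is again a polynomial of degree `≤ N`, so `Bx` is the coefficient vector of `P`, which has the
same norm as `x`.
-/

open Polynomial
open scoped ComplexConjugate

section FourierCoeff

variable {T : ℝ} [Fact (0 < T)]

theorem Continuous.integrable_haarAddCircle {E : Type*} [NormedAddCommGroup E]
    {f : AddCircle T → E} (hf : Continuous f) : Integrable f haarAddCircle :=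
  hf.integrable_of_hasCompactSupport (.of_compactSpace f)

theorem fourierCoeff_mul_fourier (f : AddCircle T → ℂ) (k j : ℤ) :
    fourierCoeff (f * ⇑(fourier k)) j = fourierCoeff f (j - k) := by
  simp only [fourierCoeff, Pi.mul_apply, smul_eq_mul]
  congr 1 with t
  rw [show -(j - k) = k + -j by ring, fourier_add]
  ring

theorem hasSum_sq_fourierCoeff_continuousMap (f : C(AddCircle T, ℂ)) :
    HasSum (fun i => ‖fourierCoeff f i‖ ^ 2) (∫ t, ‖f t‖ ^ 2 ∂haarAddCircle) := by
  have h := hasSum_sq_fourierCoeff (ContinuousMap.toLp (E := ℂ) 2 haarAddCircle ℂ f)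
  simp_rw [fourierCoeff_toLp] at h
  convert h using 1
  refine integral_congr_ae ?_
  filter_upwards [ContinuousMap.coeFn_toLp (𝕜 := ℂ) (p := 2) haarAddCircle f] with t ht
  rw [ht]

theorem sum_sq_norm_fourierCoeff_le (f : C(AddCircle T, ℂ)) (s : Finset ℤ) :
    ∑ i ∈ s, ‖fourierCoeff f i‖ ^ 2 ≤ ∫ t, ‖f t‖ ^ 2 ∂haarAddCircle :=
  sum_le_hasSum s (fun _ _ => by positivity) (hasSum_sq_fourierCoeff_continuousMap f)

theorem fourierCoeff_eq_of_hasSum {f : C(AddCircle T, ℂ)} {c : ℤ → ℂ}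
    (h : HasSum (fun n => c n • fourier n) f) : fourierCoeff f = c := by
  ext n
  rw [← fourierCoeff_toLp, ← fourierBasis_repr, fourierBasis.repr_apply_apply, coe_fourierBasis]
  have h' := (h.mapL (ContinuousMap.toLp (E := ℂ) 2 haarAddCircle ℂ)).mapL
    (innerSL ℂ (fourierLp 2 n))
  simp only [map_smul, innerSL_apply_apply, orthonormal_iff_ite.mp orthonormal_fourier] at h'
  simpa using h'.unique (hasSum_single n fun m hm => by simp [Ne.symm hm])

theorem fourierCoeff_eq_of_hasSum_nat {f : C(AddCircle T, ℂ)} {a : ℕ → ℂ}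
    (h : HasSum (fun m : ℕ => a m • fourier (m : ℤ)) f) :
    fourierCoeff f = fun n => if 0 ≤ n then a n.toNat else 0 := by
  refine fourierCoeff_eq_of_hasSum ((Nat.cast_injective.hasSum_iff fun n hn => ?_).mp ?_)
  · rw [Nat.range_cast_int, Set.mem_Ici] at hn
    rw [if_neg hn, zero_smul]
  · simpa [Function.comp_def] using h

end FourierCoeff

namespace Polynomial

theorem toAddCircle_apply (p : ℂ[X]) (u : UnitCircle) :
    p.toAddCircle u = p.eval (toCircle u : ℂ) := by
  simp [toAddCircle]

theorem toAddCircle_eq_sum {p : ℂ[X]} {N : ℕ} (hp : p.natDegree ≤ N) :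
    p.toAddCircle = ∑ k : Fin (N + 1), p.coeff k • fourier (k : ℤ) := by
  conv_lhs => rw [p.as_sum_range' (N + 1) (by omega)]
  rw [map_sum, Fin.sum_univ_eq_sum_range (fun k => p.coeff k • fourier (k : ℤ))]
  simp only [toAddCircle_monomial_eq_smul_fourier]

theorem integral_norm_sq_toAddCircle {p : ℂ[X]} {N : ℕ} (hp : p.natDegree ≤ N) :
    ∫ t, ‖p.toAddCircle t‖ ^ 2 ∂haarAddCircle =
      ∑ k : Fin (N + 1), ‖p.coeff k‖ ^ 2 := by
  refine (hasSum_sq_fourierCoeff_continuousMap _).unique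
    ((Nat.cast_injective.hasSum_iff fun n hn => ?_).mp ?_)
  · rw [Nat.range_cast_int, Set.mem_Ici, not_le] at hn
    simp [fourierCoeff_toAddCircle_eq_zero_of_lt_zero _ _ hn]
  · rw [Fin.sum_univ_eq_sum_range (fun k => ‖p.coeff k‖ ^ 2)]
    refine (hasSum_sum_of_ne_finset_zero fun m hm => ?_).congr_fun ?_
    · rw [coeff_eq_zero_of_natDegree_lt (by rw [Finset.mem_range] at hm; omega), norm_zero,
        zero_pow two_ne_zero]
    · simp [fourierCoeff_toAddCircle_natCast]

theorem exists_natDegree_le_coeff_eq {R : Type*} [Semiring R] {N : ℕ}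
    (x : Fin (N + 1) → R) :
    ∃ p : R[X], p.natDegree ≤ N ∧ (fun k : Fin (N + 1) => p.coeff k) = x :=
  ⟨∑ k : Fin (N + 1), monomial k (x k),
    natDegree_sum_le_of_forall_le _ _ fun k _ =>
      (natDegree_monomial_le _).trans (Nat.lt_succ_iff.mp k.2),
    by ext k; simp [finsetSum_coeff, coeff_monomial, Fin.val_inj]⟩

end Polynomial

section Toeplitz

open Matrix

theorem toeplitz_fourierCoeff_mulVec (f : C(UnitCircle, ℂ)) {p : ℂ[X]} {N : ℕ}
    (hp : p.natDegree ≤ N) (j : Fin (N + 1)) :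
    (toeplitz N (fourierCoeff f) *ᵥ fun k => p.coeff k) j =
      fourierCoeff (f * p.toAddCircle) j := by
  rw [toAddCircle_eq_sum hp, Finset.mul_sum, ContinuousMap.coe_sum, fourierCoeff.sum _ _
    fun k _ => (ContinuousMap.continuous _).integrable_haarAddCircle]
  simp only [Matrix.mulVec, dotProduct, toeplitz, Finset.sum_apply, mul_smul_comm,
    ContinuousMap.coe_smul, fourierCoeff.const_smul, ContinuousMap.coe_mul,
    fourierCoeff_mul_fourier]
  exact Finset.sum_congr rfl fun k _ => mul_comm _ _

theorem opNorm_toeplitz_fourierCoeff_le (f : C(UnitCircle, ℂ)) (N : ℕ) :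
    opNorm (toeplitz N (fourierCoeff f)) ≤ ‖f‖ := by
  refine ContinuousLinearMap.opNorm_le_bound _ (norm_nonneg f) fun x => ?_
  obtain ⟨p, hp, hpx⟩ := exists_natDegree_le_coeff_eq x.ofLp
  have hsq :
      ‖toEuclideanCLM (𝕜 := ℂ) (toeplitz N (fourierCoeff f)) x‖ ^ 2 ≤ (‖f‖ * ‖x‖) ^ 2 :=
    calc _ = ∑ j : Fin (N + 1), ‖fourierCoeff (f * p.toAddCircle) j‖ ^ 2 := by
          simp only [EuclideanSpace.norm_sq_eq, ofLp_toEuclideanCLM, ← hpx,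
            toeplitz_fourierCoeff_mulVec f hp]
      _ ≤ ∫ t, ‖(f * p.toAddCircle) t‖ ^ 2 ∂haarAddCircle := by
          have := sum_sq_norm_fourierCoeff_le (f * p.toAddCircle)
            ((Finset.univ : Finset (Fin (N + 1))).map (Fin.valEmbedding.trans Nat.castEmbedding))
          rwa [Finset.sum_map] at this
      _ ≤ ∫ t, ‖f‖ ^ 2 * ‖p.toAddCircle t‖ ^ 2 ∂haarAddCircle := by
          refine integral_mono (by fun_prop : Continuous _).integrable_haarAddCircle
            (by fun_prop : Continuous _).integrable_haarAddCircle fun t => ?_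
          simp only [ContinuousMap.mul_apply, norm_mul, mul_pow]
          gcongr
          exact f.norm_coe_le_norm t
      _ = (‖f‖ * ‖x‖) ^ 2 := by
          rw [integral_const_mul, integral_norm_sq_toAddCircle hp, mul_pow,
            EuclideanSpace.norm_sq_eq, ← hpx]
  exact le_of_pow_le_pow_left₀ two_ne_zero (by positivity) hsq

theorem one_le_opNorm_toeplitz_fourierCoeff {f : C(UnitCircle, ℂ)} (hf : ∀ u, ‖f u‖ = 1)
    {P Q : ℂ[X]} {N : ℕ} (hP : P.natDegree ≤ N) (hQ : Q.natDegree ≤ N) (hQ0 : Q ≠ 0)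
    (hfQ : f * Q.toAddCircle = P.toAddCircle) :
    1 ≤ opNorm (toeplitz N (fourierCoeff f)) := by
  set A := toEuclideanCLM (𝕜 := ℂ) (toeplitz N (fourierCoeff f))
  set x : EuclideanSpace ℂ (Fin (N + 1)) := WithLp.toLp 2 fun k => Q.coeff k
  have hAx : A x = WithLp.toLp 2 fun k : Fin (N + 1) => P.coeff k := by
    simp only [A, x, toEuclideanCLM_toLp]
    congr 1 with j
    rw [toeplitz_fourierCoeff_mulVec f hQ, hfQ, fourierCoeff_toAddCircle_natCast]
  have hAx_norm : ‖A x‖ = ‖x‖ := by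
    rw [← sq_eq_sq₀ (norm_nonneg _) (norm_nonneg _), hAx, EuclideanSpace.norm_sq_eq,
      EuclideanSpace.norm_sq_eq, ← integral_norm_sq_toAddCircle hP,
      ← integral_norm_sq_toAddCircle hQ, ← hfQ]
    simp [hf]
  have hx : 0 < ‖x‖ := by
    refine norm_pos_iff.mpr fun h0 => leadingCoeff_ne_zero.mpr hQ0 ?_
    simpa [x] using congr($h0 ⟨Q.natDegree, Nat.lt_succ_of_le hQ⟩)
  refine le_of_mul_le_mul_right ?_ hx
  simpa [hAx_norm, opNorm] using A.le_opNorm x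

theorem opNorm_toeplitz_fourierCoeff_eq_one {f : C(UnitCircle, ℂ)} (hf : ∀ u, ‖f u‖ = 1)
    {P Q : ℂ[X]} {N : ℕ} (hP : P.natDegree ≤ N) (hQ : Q.natDegree ≤ N) (hQ0 : Q ≠ 0)
    (hfQ : f * Q.toAddCircle = P.toAddCircle) :
    opNorm (toeplitz N (fourierCoeff f)) = 1 :=
  le_antisymm
    ((opNorm_toeplitz_fourierCoeff_le f N).trans ((f.norm_le zero_le_one).2 fun u => (hf u).le))
    (one_le_opNorm_toeplitz_fourierCoeff hf hP hQ hQ0 hfQ)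

end Toeplitz

theorem HasFPowerSeriesOnBall.hasSum_coeff_smul_fourier {ω : ℂ → ℂ}
    {p : FormalMultilinearSeries ℂ ℂ ℂ} {R : ENNReal} (hps : HasFPowerSeriesOnBall ω p 0 R)
    (hR : 1 < R) {g : C(UnitCircle, ℂ)} (hg : ∀ u, g u = ω (toCircle u)) :
    HasSum (fun m : ℕ => p.coeff m • fourier (m : ℤ)) g := by
  have hsum : Summable fun m : ℕ => p.coeff m • fourier (m : ℤ) (T := 2 * π) := by
    refine .of_norm ?_
    simpa [norm_smul, fourier_norm, FormalMultilinearSeries.norm_apply_eq_norm_coef] using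
      p.summable_norm_mul_pow (r := 1) (by simpa using hR.trans_le hps.r_le)
  convert hsum.hasSum
  ext u
  rw [← ContinuousMap.tsum_apply hsum, hg]
  have hu : (toCircle u : ℂ) ∈ Metric.eball 0 R := by
    rwa [Metric.mem_eball, edist_zero_right, ← ofReal_norm, Circle.norm_coe, ENNReal.ofReal_one]
  simpa [fourier_apply, toCircle_nsmul, mul_comm] using (hps.hasSum hu).tsum_eq.symm

theorem fourierCoeff_eq_iteratedDeriv_div_factorial {ω : ℂ → ℂ} {R : ℝ} (hR : 1 < R)
    (hω : DifferentiableOn ℂ ω (Metric.closedBall 0 R)) {g : C(UnitCircle, ℂ)}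
    (hg : ∀ u, g u = ω (toCircle u)) :
    fourierCoeff g = fun m : ℤ =>
      if 0 ≤ m then iteratedDeriv m.toNat ω 0 / (Nat.factorial m.toNat : ℂ) else 0 := by
  lift R to NNReal using zero_le_one.trans hR.le
  have hps := hω.hasFPowerSeriesOnBall (by exact_mod_cast zero_lt_one.trans hR)
  rw [hps.hasFPowerSeriesAt.eq_formalMultilinearSeries hps.analyticAt.hasFPowerSeriesAt] at hps
  simpa using
    fourierCoeff_eq_of_hasSum_nat (hps.hasSum_coeff_smul_fourier (by exact_mod_cast hR) hg)

theorem exists_one_lt_forall_mul_lt_one {ι : Type*} [Finite ι] (a : ι → ℝ)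
    (ha : ∀ i, a i < 1) :
    ∃ R, 1 < R ∧ ∀ i, a i * R < 1 := by
  have h : ∀ᶠ R in nhdsWithin (1 : ℝ) (Set.Ioi 1), ∀ i, a i * R < 1 :=
    Filter.eventually_all.2 fun i => nhdsWithin_le_nhds <|
      (continuous_const.mul continuous_id).continuousAt.eventually_lt continuousAt_const
        (by simpa using ha i)
  exact (eventually_mem_nhdsWithin.and h).exists

section Blaschke

variable {n : ℕ} (l : ℂ) (z : Fin n → ℂ)

def blaschkeNum : ℂ[X] := C l * ∏ j, (X - C (z j))

def blaschkeDen : ℂ[X] := ∏ j, (1 - C (conj (z j)) * X)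

theorem natDegree_blaschkeNum_le : (blaschkeNum l z).natDegree ≤ n :=
  (natDegree_C_mul_le _ _).trans ((natDegree_prod_le _ _).trans (by simp))

theorem natDegree_blaschkeDen_le : (blaschkeDen z).natDegree ≤ n :=
  (natDegree_prod_le _ _).trans
    ((Finset.sum_le_card_nsmul _ _ 1 fun j _ => by compute_degree).trans (by simp))

theorem eval_blaschkeNum_div_eval_blaschkeDen (w : ℂ) :
    (blaschkeNum l z).eval w / (blaschkeDen z).eval w =
      l * ∏ j, (w - z j) / (1 - conj (z j) * w) := by
  simp [blaschkeNum, blaschkeDen, eval_prod, Finset.prod_div_distrib, mul_div_assoc]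

theorem eval_blaschkeDen_ne_zero {w : ℂ} (hw : ∀ j, ‖z j‖ * ‖w‖ < 1) :
    (blaschkeDen z).eval w ≠ 0 := by
  simp only [blaschkeDen, eval_prod, eval_sub, eval_one, eval_mul, eval_C, eval_X,
    Finset.prod_ne_zero_iff, sub_ne_zero]
  intro j _ h
  have := hw j
  rw [← norm_conj (z j), ← norm_mul, ← h, norm_one] at this
  exact lt_irrefl _ this

theorem norm_eval_blaschkeNum {l : ℂ} (hl : ‖l‖ = 1) {c : ℂ} (hc : ‖c‖ = 1) :
    ‖(blaschkeNum l z).eval c‖ = ‖(blaschkeDen z).eval c‖ := by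
  simp only [blaschkeNum, blaschkeDen, eval_prod, eval_sub, eval_one, eval_mul, eval_C, eval_X,
    norm_mul, norm_prod, hl, one_mul]
  refine Finset.prod_congr rfl fun j _ => ?_
  have hcc : conj c * c = 1 := by rw [← normSq_eq_conj_mul_self]; simp [normSq_eq_norm_sq, hc]
  rw [show 1 - conj (z j) * c = conj (c - z j) * c by rw [map_sub, sub_mul, hcc],
    norm_mul, norm_conj, hc, mul_one]

end Blaschke

theorem opNorm_toeplitz_taylorCoeff_div_eq_one {P Q : ℂ[X]} {N : ℕ} {R : ℝ} (hR : 1 < R)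
    (hQR : ∀ w : ℂ, ‖w‖ ≤ R → Q.eval w ≠ 0)
    (hPQ : ∀ c : ℂ, ‖c‖ = 1 → ‖P.eval c‖ = ‖Q.eval c‖)
    (hP : P.natDegree ≤ N) (hQ : Q.natDegree ≤ N) :
    opNorm (toeplitz N (fun m : ℤ =>
      if 0 ≤ m then iteratedDeriv m.toNat (fun w => P.eval w / Q.eval w) 0 /
        (Nat.factorial m.toNat : ℂ) else 0)) = 1 := by
  have hdiff : DifferentiableOn ℂ (fun w => P.eval w / Q.eval w) (Metric.closedBall 0 R) :=
    P.differentiable.differentiableOn.div Q.differentiable.differentiableOn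
      fun w hw => hQR w (mem_closedBall_zero_iff.1 hw)
  have h_circle (u : UnitCircle) : ‖(toCircle u : ℂ)‖ ≤ R :=
    (Circle.norm_coe _).trans_le hR.le
  let g : C(UnitCircle, ℂ) := ⟨fun u => P.eval (toCircle u : ℂ) / Q.eval (toCircle u : ℂ),
    hdiff.continuousOn.comp_continuous (by fun_prop) fun u =>
      mem_closedBall_zero_iff.2 (h_circle u)⟩
  rw [← fourierCoeff_eq_iteratedDeriv_div_factorial hR hdiff (g := g) fun _ => rfl]
  refine opNorm_toeplitz_fourierCoeff_eq_one (fun u => ?_) hP hQ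
    (fun h => hQR 0 (by simpa using zero_le_one.trans hR.le) (by simp [h])) ?_
  · simp [g, hPQ _ (Circle.norm_coe _), hQR _ (h_circle u)]
  · ext u
    simp [g, toAddCircle_apply, div_mul_cancel₀ _ (hQR _ (h_circle u))]

theorem stmt4_general (N n : ℕ) (hnN : n ≤ N) (ω : ℂ → ℂ)
    (hω : IsBlaschke n ω) :
    opNorm (toeplitz N (fun m : ℤ =>
      if 0 ≤ m then iteratedDeriv m.toNat ω 0 / (Nat.factorial m.toNat : ℂ)
      else 0)) = 1 := by
  obtain ⟨l, z, hl, hz, hω⟩ := hω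
  obtain ⟨R, hR, hzR⟩ := exists_one_lt_forall_mul_lt_one (fun j => ‖z j‖) hz
  obtain rfl : ω = fun w => (blaschkeNum l z).eval w / (blaschkeDen z).eval w :=
    funext fun w => (hω w).trans (eval_blaschkeNum_div_eval_blaschkeDen l z w).symm
  exact opNorm_toeplitz_taylorCoeff_div_eq_one hR
    (fun w hw => eval_blaschkeDen_ne_zero z fun j =>
      (mul_le_mul_of_nonneg_left hw (norm_nonneg _)).trans_lt (hzR j))
    (fun c hc => norm_eval_blaschkeNum z hl hc)
    ((natDegree_blaschkeNum_le l z).trans hnN) ((natDegree_blaschkeDen_le z).trans hnN)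

/-- If `ω` is a Blaschke product of order `n` with `1 ≤ n ≤ N`, then the lower
triangular Toeplitz matrix built from the Taylor coefficients of `ω` at `0` has
operator norm `1` on `ℂ^{N+1}`. -/
theorem stmt4 (N n : ℕ) (hn : 1 ≤ n) (hnN : n ≤ N) (ω : ℂ → ℂ)
    (hω : IsBlaschke n ω) :
    opNorm (toeplitz N (fun m : ℤ =>
      if 0 ≤ m then iteratedDeriv m.toNat ω 0 / (Nat.factorial m.toNat : ℂ)
      else 0)) = 1 :=
  stmt4_general N n hnN ω hω
end
end

section
/- With p and q as in the stated setup, for every real θ such that e^{iθ} ∉ {e^{iα_1},…,e^{iα_N}} one has q(e^{iθ})/p(e^{iθ}) = ∏_{n=1}^{N} sin((θ − β_n)/2)/sin((θ − α_n)/2); in particular q/p is real-valued on 𝕋 off the points e^{iα_1},…,e^{iα_N}. -/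
open MeasureTheory Complex Real AddCircle
open scoped Real

noncomputable section

/-- The polynomial-type function `p(z) = e^{-iα/2} ∏_{n}(z - e^{iα_n})` built from
angles `a 0, …, a (N-1)` (with `α` their sum). -/
def pFun (N : ℕ) (a : ℕ → ℝ) (z : ℂ) : ℂ :=
  Complex.exp (-Complex.I * ((∑ i ∈ Finset.range N, a i : ℝ) : ℂ) / 2) *
    ∏ i ∈ Finset.range N, (z - Complex.exp (Complex.I * (a i : ℂ)))

/- Each factor `e^{iθ} - e^{iα_n}` equals `e^{i(θ+α_n)/2} · 2i sin((θ-α_n)/2)`; the phases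
`e^{iα_n/2}` cancel against the normalisation `e^{-iα/2}`, so `p(e^{iθ})` is a real multiple
of `e^{iNθ/2} (2i)^N`, a factor shared by `p` and `q` that cancels in `q/p`. -/

theorem Complex.exp_mul_I_sub_exp_mul_I (x y : ℂ) :
    exp (x * I) - exp (y * I) = exp ((x + y) / 2 * I) * (2 * I * sin ((x - y) / 2)) := by
  have hx : exp ((x + y) / 2 * I) * exp ((x - y) / 2 * I) = exp (x * I) := by
    rw [← Complex.exp_add]; ring_nf
  have hy : exp ((x + y) / 2 * I) * exp (-((x - y) / 2) * I) = exp (y * I) := by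
    rw [← Complex.exp_add]; ring_nf
  rw [← hx, ← hy, Complex.sin]
  linear_combination (exp ((x + y) / 2 * I) * exp ((x - y) / 2 * I) -
    exp ((x + y) / 2 * I) * exp (-((x - y) / 2) * I)) * I_sq

theorem pFun_exp_mul_I (N : ℕ) (c : ℕ → ℝ) (θ : ℝ) :
    pFun N c (exp (θ * I)) =
      exp (N * θ / 2 * I) * (2 * I) ^ N *
        ((∏ i ∈ Finset.range N, Real.sin ((θ - c i) / 2) : ℝ) : ℂ) := by
  have hfactor (i : ℕ) : exp (θ * I) - exp (I * c i) =
      exp ((θ + c i) / 2 * I) * (2 * I * ((Real.sin ((θ - c i) / 2) : ℝ) : ℂ)) := by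
    rw [mul_comm I, exp_mul_I_sub_exp_mul_I]
    push_cast
    rfl
  have hphase : -I * ((∑ i ∈ Finset.range N, c i : ℝ) : ℂ) / 2 +
      ∑ i ∈ Finset.range N, (θ + c i) / 2 * I = N * θ / 2 * I := by
    rw [← Finset.sum_mul, ← Finset.sum_div, Finset.sum_add_distrib, Finset.sum_const,
      Finset.card_range, nsmul_eq_mul]
    push_cast
    ring
  rw [pFun, Finset.prod_congr rfl fun i _ => hfactor i, Finset.prod_mul_distrib,
    Finset.prod_mul_distrib, ← Complex.exp_sum, Finset.prod_const, Finset.card_range,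
    ← ofReal_prod, ← mul_assoc, ← mul_assoc, ← Complex.exp_add, hphase]

theorem stmt8_general (N : ℕ) (a b : ℕ → ℝ) :
    ∀ θ : ℝ, (∀ i < N, Complex.exp (θ * Complex.I) ≠ Complex.exp ((a i : ℂ) * Complex.I)) →
      pFun N b (Complex.exp (θ * Complex.I)) / pFun N a (Complex.exp (θ * Complex.I)) =
        ((∏ i ∈ Finset.range N, Real.sin ((θ - b i) / 2) / Real.sin ((θ - a i) / 2) : ℝ) : ℂ) ∧
      (pFun N b (Complex.exp (θ * Complex.I)) / pFun N a (Complex.exp (θ * Complex.I))).im = 0 := by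
  intro θ _
  have hcommon : exp (N * θ / 2 * I) * (2 * I) ^ N ≠ 0 :=
    mul_ne_zero (exp_ne_zero _) (pow_ne_zero _ (mul_ne_zero two_ne_zero I_ne_zero))
  have hquot : pFun N b (exp (θ * I)) / pFun N a (exp (θ * I)) =
      ((∏ i ∈ Finset.range N, Real.sin ((θ - b i) / 2) / Real.sin ((θ - a i) / 2) : ℝ) : ℂ) := by
    rw [pFun_exp_mul_I, pFun_exp_mul_I, mul_div_mul_left _ _ hcommon, Finset.prod_div_distrib,
      ← ofReal_div]
  exact ⟨hquot, by rw [hquot, ofReal_im]⟩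

/-- On the unit circle, away from the zeros of `p`, the quotient `q/p` is given by
the real product `∏ sin((θ-β_n)/2)/sin((θ-α_n)/2)`; in particular it is
real-valued there. -/
theorem stmt8 (N : ℕ) (hN : 1 ≤ N) (a b : ℕ → ℝ) (ha0 : 0 ≤ a 0)
    (hab : ∀ i < N, a i < b i) (hba : ∀ i, i + 1 < N → b i < a (i + 1))
    (hlast : b (N - 1) < a 0 + 2 * π) :
    ∀ θ : ℝ, (∀ i < N, Complex.exp (θ * Complex.I) ≠ Complex.exp ((a i : ℂ) * Complex.I)) →
      pFun N b (Complex.exp (θ * Complex.I)) / pFun N a (Complex.exp (θ * Complex.I)) =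
        ((∏ i ∈ Finset.range N, Real.sin ((θ - b i) / 2) / Real.sin ((θ - a i) / 2) : ℝ) : ℂ) ∧
      (pFun N b (Complex.exp (θ * Complex.I)) / pFun N a (Complex.exp (θ * Complex.I))).im = 0 :=
  stmt8_general N a b
end
end

section
/- With p and q as in the stated setup and α_{N+1} := α_1 + 2π, for each n ∈ {1,…,N} the function θ ↦ q(e^{iθ})/p(e^{iθ}) is real-valued and strictly increasing on the open interval (α_n, α_{n+1}) and maps that interval onto all of ℝ; it is negative on (α_n, β_n), zero at θ = β_n, and positive on (β_n, α_{n+1}). -/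
/-!
On the unit circle `e^{iθ} - e^{iγ} = 2i e^{i(θ+γ)/2} sin((θ-γ)/2)`, so the normalisations
`e^{-iα/2}` and `e^{-iβ/2}` turn `q(e^{iθ})/p(e^{iθ})` into the real function
`∏ₖ sin((θ-β_k)/2) / sin((θ-α_k)/2)`.

A quotient `sin((θ-c)/2) / sin((θ-d)/2)` is strictly monotone between consecutive poles:
increasing if `sin((c-d)/2) > 0`, decreasing if it is negative. On `(β_n, α_{n+1})`, pairing
`β_k` with `α_k` writes the function as a product of positive increasing factors. On
`(α_n, β_n)`, pairing `β_k` with `α_{k+1}` (which costs a sign, as `α_{N+1} = α_1 + 2π`)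
writes it as minus a product of positive decreasing factors. Surjectivity is the intermediate
value theorem for `q - y p` on the closed arc: `p` vanishes at both ends, where `q` has
opposite signs.
-/

open MeasureTheory Complex Real AddCircle
open scoped Real

noncomputable section

open Finset Set

theorem strictMonoOn_Ioo_of_strictMonoOn_Ioo {α β : Type*} [LinearOrder α] [Preorder β]
    {f : α → β} {l c r : α} (hl : StrictMonoOn f (Ioo l c)) (hr : StrictMonoOn f (Ioo c r))
    (hlc : ∀ x ∈ Ioo l c, f x < f c) (hcr : ∀ x ∈ Ioo c r, f c < f x) :
    StrictMonoOn f (Ioo l r) := by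
  intro x hx y hy hxy
  rcases lt_trichotomy x c with hxc | rfl | hcx
  · rcases lt_trichotomy y c with hyc | rfl | hcy
    · exact hl ⟨hx.1, hxc⟩ ⟨hy.1, hyc⟩ hxy
    · exact hlc x ⟨hx.1, hxc⟩
    · exact (hlc x ⟨hx.1, hxc⟩).trans (hcr y ⟨hcy, hy.2⟩)
  · exact hcr y ⟨hxy, hy.2⟩
  · exact hr ⟨hcx, hx.2⟩ ⟨hcx.trans hxy, hy.2⟩ hxy

theorem strictMonoOn_finset_prod {ι α : Type*} [Preorder α] {s : Finset ι} {I : Set α}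
    {f : ι → α → ℝ} (hs : s.Nonempty) (hpos : ∀ i ∈ s, ∀ x ∈ I, 0 < f i x)
    (hf : ∀ i ∈ s, StrictMonoOn (f i) I) : StrictMonoOn (fun x => ∏ i ∈ s, f i x) I :=
  fun _ hx _ hy hxy =>
    prod_lt_prod_of_nonempty (fun i hi => hpos i hi _ hx) (fun i hi => hf i hi hx hy hxy) hs

theorem strictAntiOn_finset_prod {ι α : Type*} [Preorder α] {s : Finset ι} {I : Set α}
    {f : ι → α → ℝ} (hs : s.Nonempty) (hpos : ∀ i ∈ s, ∀ x ∈ I, 0 < f i x)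
    (hf : ∀ i ∈ s, StrictAntiOn (f i) I) : StrictAntiOn (fun x => ∏ i ∈ s, f i x) I :=
  fun _ hx _ hy hxy =>
    prod_lt_prod_of_nonempty (fun i hi => hpos i hi _ hy) (fun i hi => hf i hi hx hy hxy) hs

theorem prod_neg_of_unique_neg {ι : Type*} [DecidableEq ι] {s : Finset ι} {f : ι → ℝ} {j : ι}
    (hj : j ∈ s) (hneg : f j < 0) (hpos : ∀ i ∈ s, i ≠ j → 0 < f i) : ∏ i ∈ s, f i < 0 := by
  rw [← mul_prod_erase s f hj]
  exact mul_neg_of_neg_of_pos hneg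
    (prod_pos fun i hi => hpos i (mem_of_mem_erase hi) (ne_of_mem_erase hi))

theorem exists_mem_Ioo_eq_zero_of_mul_neg {f : ℝ → ℝ} {l r : ℝ} (hlr : l ≤ r)
    (hf : ContinuousOn f (Icc l r)) (hsign : f l * f r < 0) : ∃ x ∈ Ioo l r, f x = 0 := by
  rcases mul_neg_iff.1 hsign with ⟨hl, hr⟩ | ⟨hl, hr⟩
  · exact intermediate_value_Ioo' hlr hf ⟨hr, hl⟩
  · exact intermediate_value_Ioo hlr hf ⟨hl, hr⟩

theorem sin_half_pos {x : ℝ} (h0 : 0 < x) (h2 : x < 2 * π) : 0 < Real.sin (x / 2) :=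
  Real.sin_pos_of_pos_of_lt_pi (by linarith) (by linarith)

theorem sin_half_neg {x : ℝ} (h0 : x < 0) (h2 : -(2 * π) < x) : Real.sin (x / 2) < 0 := by
  have := sin_half_pos (x := -x) (by linarith) (by linarith)
  rwa [neg_div, Real.sin_neg, neg_pos] at this

theorem sin_half_mul_sin_half_pos {x y : ℝ} (hx : |x| < 2 * π) (hy : |y| < 2 * π)
    (hxy : 0 < x * y) : 0 < Real.sin (x / 2) * Real.sin (y / 2) := by
  rw [abs_lt] at hx hy
  rcases mul_pos_iff.1 hxy with ⟨hx0, hy0⟩ | ⟨hx0, hy0⟩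
  · exact mul_pos (sin_half_pos hx0 hx.2) (sin_half_pos hy0 hy.2)
  · exact mul_pos_of_neg_of_neg (sin_half_neg hx0 hx.1) (sin_half_neg hy0 hy.1)

theorem sin_half_mul_sin_half_neg {x y : ℝ} (hx : |x| < 2 * π) (hy : |y| < 2 * π)
    (hxy : x * y < 0) : Real.sin (x / 2) * Real.sin (y / 2) < 0 := by
  rw [abs_lt] at hx hy
  rcases mul_neg_iff.1 hxy with ⟨hx0, hy0⟩ | ⟨hx0, hy0⟩
  · exact mul_neg_of_pos_of_neg (sin_half_pos hx0 hx.2) (sin_half_neg hy0 hy.1)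
  · exact mul_neg_of_neg_of_pos (sin_half_neg hx0 hx.1) (sin_half_pos hy0 hy.2)

def sinRatio (c d θ : ℝ) : ℝ := Real.sin ((θ - c) / 2) / Real.sin ((θ - d) / 2)

theorem sinRatio_pos {c d θ : ℝ} (hc : |θ - c| < 2 * π) (hd : |θ - d| < 2 * π)
    (h : 0 < (θ - c) * (θ - d)) : 0 < sinRatio c d θ := by
  rw [sinRatio, div_pos_iff, ← mul_pos_iff]
  exact sin_half_mul_sin_half_pos hc hd h

theorem sinRatio_sub_sinRatio {c d θ₁ θ₂ : ℝ} (h₁ : Real.sin ((θ₁ - d) / 2) ≠ 0)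
    (h₂ : Real.sin ((θ₂ - d) / 2) ≠ 0) :
    sinRatio c d θ₂ - sinRatio c d θ₁ = Real.sin ((c - d) / 2) * Real.sin ((θ₂ - θ₁) / 2) /
      (Real.sin ((θ₁ - d) / 2) * Real.sin ((θ₂ - d) / 2)) := by
  rw [sinRatio, sinRatio, div_sub_div _ _ h₂ h₁,
    mul_comm (Real.sin ((θ₂ - d) / 2)) (Real.sin ((θ₁ - d) / 2))]
  congr 1
  simp only [sub_div, Real.sin_sub]
  ring

theorem sinRatio_lt_sinRatio {c d θ₁ θ₂ : ℝ} (hcd : 0 < c - d) (hcd' : c - d < 2 * π)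
    (h12 : θ₁ < θ₂) (h12' : θ₂ - θ₁ < 2 * π)
    (hd : 0 < Real.sin ((θ₁ - d) / 2) * Real.sin ((θ₂ - d) / 2)) :
    sinRatio c d θ₁ < sinRatio c d θ₂ := by
  rw [← sub_pos, sinRatio_sub_sinRatio (left_ne_zero_of_mul hd.ne') (right_ne_zero_of_mul hd.ne')]
  exact div_pos (mul_pos (sin_half_pos hcd hcd') (sin_half_pos (by linarith) h12')) hd

theorem sinRatio_lt_sinRatio_of_neg {c d θ₁ θ₂ : ℝ} (hcd : c - d < 0) (hcd' : -(2 * π) < c - d)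
    (h12 : θ₁ < θ₂) (h12' : θ₂ - θ₁ < 2 * π)
    (hd : 0 < Real.sin ((θ₁ - d) / 2) * Real.sin ((θ₂ - d) / 2)) :
    sinRatio c d θ₂ < sinRatio c d θ₁ := by
  rw [← sub_neg, sinRatio_sub_sinRatio (left_ne_zero_of_mul hd.ne') (right_ne_zero_of_mul hd.ne')]
  exact div_neg_of_neg_of_pos
    (mul_neg_of_neg_of_pos (sin_half_neg hcd hcd') (sin_half_pos (by linarith) h12')) hd

def sinProd (N : ℕ) (a : ℕ → ℝ) (θ : ℝ) : ℝ := ∏ i ∈ range N, Real.sin ((θ - a i) / 2)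

theorem exp_mul_I_sub_exp (x y : ℝ) :
    Complex.exp (x * Complex.I) - Complex.exp (Complex.I * y) =
      Complex.exp (((x + y) / 2 : ℝ) * Complex.I) * (2 * Complex.I * Real.sin ((x - y) / 2)) := by
  have two_I_sin (w : ℂ) : 2 * Complex.I * Complex.sin w =
      Complex.exp (w * Complex.I) - Complex.exp (-w * Complex.I) := by
    rw [Complex.sin]
    linear_combination (Complex.exp (-w * Complex.I) - Complex.exp (w * Complex.I)) *
      Complex.I_mul_I
  rw [Complex.ofReal_sin, two_I_sin, mul_sub, ← Complex.exp_add, ← Complex.exp_add]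
  congr 1 <;> congr 1 <;> push_cast <;> ring

theorem pFun_exp_mul_I_s9 (N : ℕ) (a : ℕ → ℝ) (θ : ℝ) :
    pFun N a (Complex.exp (θ * Complex.I)) =
      Complex.exp ((N * θ / 2 : ℝ) * Complex.I) * (2 * Complex.I) ^ N * sinProd N a θ := by
  simp only [pFun, sinProd, exp_mul_I_sub_exp, prod_mul_distrib, prod_const, card_range,
    ← Complex.exp_sum, Complex.ofReal_prod]
  rw [← mul_assoc, ← mul_assoc, ← Complex.exp_add]
  congr 3
  · push_cast
    rw [← sum_mul, ← sum_div, sum_add_distrib, sum_const, card_range, nsmul_eq_mul]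
    ring
  · rw [mul_pow]

theorem pFun_div_pFun_exp_mul_I (N : ℕ) (a b : ℕ → ℝ) (θ : ℝ) :
    pFun N b (Complex.exp (θ * Complex.I)) / pFun N a (Complex.exp (θ * Complex.I)) =
      ((sinProd N b θ / sinProd N a θ : ℝ) : ℂ) := by
  rw [pFun_exp_mul_I_s9, pFun_exp_mul_I_s9, mul_div_mul_left _ _ (by simp [Complex.exp_ne_zero]),
    Complex.ofReal_div]

theorem prod_sin_half_sub_succ {N : ℕ} {a : ℕ → ℝ} (hN : 0 < N) (ha : a N = a 0 + 2 * π)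
    (θ : ℝ) : ∏ i ∈ range N, Real.sin ((θ - a (i + 1)) / 2) = -sinProd N a θ := by
  obtain ⟨M, rfl⟩ := Nat.exists_eq_add_one_of_ne_zero hN.ne'
  have hsin : Real.sin ((θ - a (M + 1)) / 2) = -Real.sin ((θ - a 0) / 2) := by
    rw [ha, show (θ - (a 0 + 2 * π)) / 2 = (θ - a 0) / 2 - π by ring, Real.sin_sub_pi]
  rw [sinProd, prod_range_succ, hsin, prod_range_succ']
  ring

theorem sinProd_div_sinProd (N : ℕ) (a b : ℕ → ℝ) (θ : ℝ) :
    sinProd N b θ / sinProd N a θ = ∏ i ∈ range N, sinRatio (b i) (a i) θ :=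
  (prod_div_distrib ..).symm

theorem sinProd_div_sinProd_eq_neg_prod {N : ℕ} {a : ℕ → ℝ} (hN : 0 < N)
    (ha : a N = a 0 + 2 * π) (b : ℕ → ℝ) (θ : ℝ) :
    sinProd N b θ / sinProd N a θ = -∏ i ∈ range N, sinRatio (b i) (a (i + 1)) θ := by
  rw [← neg_neg (sinProd N a θ), ← prod_sin_half_sub_succ hN ha, div_neg, sinProd,
    ← prod_div_distrib]
  rfl

theorem sinProd_self {N n : ℕ} (hn : n < N) (b : ℕ → ℝ) : sinProd N b (b n) = 0 :=
  prod_eq_zero (mem_range.2 hn) (by simp)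

structure Interlaced (N : ℕ) (a b : ℕ → ℝ) : Prop where
  lt_b : ∀ i < N, a i < b i
  b_lt : ∀ i < N, b i < a (i + 1)
  period : a N = a 0 + 2 * π

namespace Interlaced

variable {N n i j : ℕ} {a b : ℕ → ℝ} {θ θ' : ℝ}

theorem strictMonoOn_a (h : Interlaced N a b) : StrictMonoOn a (Set.Iic N) :=
  strictMonoOn_Iic_of_lt_succ fun m hm => (h.lt_b m hm).trans (h.b_lt m hm)

theorem a_le_a (h : Interlaced N a b) (hij : i ≤ j) (hj : j ≤ N) : a i ≤ a j :=
  h.strictMonoOn_a.monotoneOn (Set.mem_Iic.2 (hij.trans hj)) (Set.mem_Iic.2 hj) hij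

theorem b_lt_a (h : Interlaced N a b) (hij : i < j) (hj : j ≤ N) : b i < a j :=
  (h.b_lt i (by omega)).trans_le (h.a_le_a hij hj)

theorem a_lt_b (h : Interlaced N a b) (hji : j ≤ i) (hi : i < N) : a j < b i :=
  (h.a_le_a hji hi.le).trans_lt (h.lt_b i hi)

theorem a_mem_Icc (h : Interlaced N a b) (hi : i ≤ N) : a i ∈ Icc (a 0) (a 0 + 2 * π) :=
  ⟨h.a_le_a (Nat.zero_le i) hi, h.period ▸ h.a_le_a (j := N) hi le_rfl⟩

theorem b_mem_Ioo (h : Interlaced N a b) (hi : i < N) : b i ∈ Ioo (a 0) (a 0 + 2 * π) :=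
  ⟨h.a_lt_b (Nat.zero_le i) hi, h.period ▸ h.b_lt_a (j := N) hi le_rfl⟩

theorem abs_sub_a_lt (h : Interlaced N a b) (hn : n < N) (hθ : θ ∈ Ioo (a n) (a (n + 1)))
    (hi : i ≤ N) : |θ - a i| < 2 * π := by
  obtain ⟨hi₀, hi₁⟩ := h.a_mem_Icc hi
  obtain ⟨hn₀, -⟩ := h.a_mem_Icc hn.le
  obtain ⟨-, hn₁⟩ := h.a_mem_Icc (i := n + 1) hn
  exact abs_sub_lt_iff.2 ⟨by linarith [hθ.2], by linarith [hθ.1]⟩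

theorem abs_sub_b_lt (h : Interlaced N a b) (hn : n < N) (hθ : θ ∈ Icc (a n) (a (n + 1)))
    (hi : i < N) : |θ - b i| < 2 * π := by
  obtain ⟨hi₀, hi₁⟩ := h.b_mem_Ioo hi
  obtain ⟨hn₀, -⟩ := h.a_mem_Icc hn.le
  obtain ⟨-, hn₁⟩ := h.a_mem_Icc (i := n + 1) hn
  exact abs_sub_lt_iff.2 ⟨by linarith [hθ.2], by linarith [hθ.1]⟩

theorem sin_sub_a_mul_sin_sub_a_pos (h : Interlaced N a b) (hn : n < N)
    (hθ : θ ∈ Ioo (a n) (a (n + 1))) (hθ' : θ' ∈ Ioo (a n) (a (n + 1))) (hi : i ≤ N) :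
    0 < Real.sin ((θ - a i) / 2) * Real.sin ((θ' - a i) / 2) := by
  refine sin_half_mul_sin_half_pos (h.abs_sub_a_lt hn hθ hi) (h.abs_sub_a_lt hn hθ' hi) ?_
  rcases le_or_gt i n with hin | hni
  · have := h.a_le_a hin hn.le
    exact mul_pos (by linarith [hθ.1]) (by linarith [hθ'.1])
  · have := h.a_le_a hni hi
    exact mul_pos_of_neg_of_neg (by linarith [hθ.2]) (by linarith [hθ'.2])

theorem sinProd_ne_zero (h : Interlaced N a b) (hn : n < N) (hθ : θ ∈ Ioo (a n) (a (n + 1))) :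
    sinProd N a θ ≠ 0 :=
  prod_ne_zero_iff.2 fun _ hi =>
    mul_self_pos.1 (h.sin_sub_a_mul_sin_sub_a_pos hn hθ hθ (mem_range.1 hi).le)

theorem sinRatio_b_a_pos (h : Interlaced N a b) (hn : n < N) (hθ : θ ∈ Ioo (b n) (a (n + 1)))
    (hi : i < N) : 0 < sinRatio (b i) (a i) θ := by
  have hθ' : θ ∈ Ioo (a n) (a (n + 1)) := ⟨(h.lt_b n hn).trans hθ.1, hθ.2⟩
  refine sinRatio_pos (h.abs_sub_b_lt hn (Ioo_subset_Icc_self hθ') hi)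
    (h.abs_sub_a_lt hn hθ' hi.le) ?_
  rcases lt_trichotomy i n with hin | rfl | hni
  · have := h.b_lt_a hin hn.le
    have := h.lt_b i hi
    exact mul_pos (by linarith [hθ'.1]) (by linarith [hθ'.1])
  · exact mul_pos (by linarith [hθ.1]) (by linarith [hθ'.1])
  · have := h.a_le_a hni hi.le
    have := h.lt_b i hi
    exact mul_pos_of_neg_of_neg (by linarith [hθ.2]) (by linarith [hθ.2])

theorem sinRatio_b_a_succ_pos (h : Interlaced N a b) (hn : n < N) (hθ : θ ∈ Ioo (a n) (b n))
    (hi : i < N) : 0 < sinRatio (b i) (a (i + 1)) θ := by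
  have hθ' : θ ∈ Ioo (a n) (a (n + 1)) := ⟨hθ.1, hθ.2.trans (h.b_lt n hn)⟩
  refine sinRatio_pos (h.abs_sub_b_lt hn (Ioo_subset_Icc_self hθ') hi)
    (h.abs_sub_a_lt hn hθ' hi) ?_
  rcases lt_trichotomy i n with hin | rfl | hni
  · have := h.b_lt_a hin hn.le
    have := h.a_le_a hin hn.le
    exact mul_pos (by linarith [hθ.1]) (by linarith [hθ.1])
  · exact mul_pos_of_neg_of_neg (by linarith [hθ.2]) (by linarith [hθ'.2])
  · have := h.lt_b i hi
    have := h.a_le_a hni hi.le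
    have := h.a_le_a (Nat.le_succ_of_le hni) hi
    exact mul_pos_of_neg_of_neg (by linarith [hθ'.2]) (by linarith [hθ'.2])

theorem sinProd_div_pos (h : Interlaced N a b) (hn : n < N)
    (hθ : θ ∈ Ioo (b n) (a (n + 1))) : 0 < sinProd N b θ / sinProd N a θ := by
  rw [sinProd_div_sinProd]
  exact prod_pos fun i hi => h.sinRatio_b_a_pos hn hθ (mem_range.1 hi)

theorem sinProd_div_neg (h : Interlaced N a b) (hn : n < N)
    (hθ : θ ∈ Ioo (a n) (b n)) : sinProd N b θ / sinProd N a θ < 0 := by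
  rw [sinProd_div_sinProd_eq_neg_prod (by omega) h.period, neg_neg_iff_pos]
  exact prod_pos fun i hi => h.sinRatio_b_a_succ_pos hn hθ (mem_range.1 hi)

theorem sub_lt_two_pi_of_mem_Ioo (h : Interlaced N a b) (hn : n < N)
    (hθ : θ ∈ Ioo (a n) (a (n + 1))) (hθ' : θ' ∈ Ioo (a n) (a (n + 1))) : θ' - θ < 2 * π := by
  obtain ⟨hn₀, -⟩ := h.a_mem_Icc hn.le
  obtain ⟨-, hn₁⟩ := h.a_mem_Icc (i := n + 1) hn
  linarith [hθ.1, hθ'.2]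

theorem strictMonoOn_sinProd_div_Ioo_b_a (h : Interlaced N a b) (hn : n < N) :
    StrictMonoOn (fun θ => sinProd N b θ / sinProd N a θ) (Ioo (b n) (a (n + 1))) := by
  have hsub : Ioo (b n) (a (n + 1)) ⊆ Ioo (a n) (a (n + 1)) :=
    Ioo_subset_Ioo_left (h.lt_b n hn).le
  simp only [sinProd_div_sinProd]
  refine strictMonoOn_finset_prod (nonempty_range_iff.2 (by omega))
    (fun i hi θ hθ => h.sinRatio_b_a_pos hn hθ (mem_range.1 hi))
    fun i hi θ₁ hθ₁ θ₂ hθ₂ h12 => ?_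
  have hi := mem_range.1 hi
  obtain ⟨hb₀, hb₁⟩ := h.b_mem_Ioo hi
  obtain ⟨ha₀, -⟩ := h.a_mem_Icc hi.le
  exact sinRatio_lt_sinRatio (by linarith [h.lt_b i hi]) (by linarith) h12
    (h.sub_lt_two_pi_of_mem_Ioo hn (hsub hθ₁) (hsub hθ₂))
    (h.sin_sub_a_mul_sin_sub_a_pos hn (hsub hθ₁) (hsub hθ₂) hi.le)

theorem strictMonoOn_sinProd_div_Ioo_a_b (h : Interlaced N a b) (hn : n < N) :
    StrictMonoOn (fun θ => sinProd N b θ / sinProd N a θ) (Ioo (a n) (b n)) := by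
  have hsub : Ioo (a n) (b n) ⊆ Ioo (a n) (a (n + 1)) :=
    Ioo_subset_Ioo_right (h.b_lt n hn).le
  simp only [sinProd_div_sinProd_eq_neg_prod (by omega : 0 < N) h.period]
  refine StrictAntiOn.neg (strictAntiOn_finset_prod (nonempty_range_iff.2 (by omega))
    (fun i hi θ hθ => h.sinRatio_b_a_succ_pos hn hθ (mem_range.1 hi))
    fun i hi θ₁ hθ₁ θ₂ hθ₂ h12 => ?_)
  have hi := mem_range.1 hi
  obtain ⟨hb₀, hb₁⟩ := h.b_mem_Ioo hi
  obtain ⟨-, ha₁⟩ := h.a_mem_Icc (i := i + 1) hi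
  exact sinRatio_lt_sinRatio_of_neg (by linarith [h.b_lt i hi]) (by linarith) h12
    (h.sub_lt_two_pi_of_mem_Ioo hn (hsub hθ₁) (hsub hθ₂))
    (h.sin_sub_a_mul_sin_sub_a_pos hn (hsub hθ₁) (hsub hθ₂) hi)

theorem strictMonoOn_sinProd_div (h : Interlaced N a b) (hn : n < N) :
    StrictMonoOn (fun θ => sinProd N b θ / sinProd N a θ) (Ioo (a n) (a (n + 1))) := by
  refine strictMonoOn_Ioo_of_strictMonoOn_Ioo (c := b n) (h.strictMonoOn_sinProd_div_Ioo_a_b hn)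
    (h.strictMonoOn_sinProd_div_Ioo_b_a hn) (fun θ hθ => ?_) fun θ hθ => ?_
  · simpa [sinProd_self hn b] using h.sinProd_div_neg hn hθ
  · simpa [sinProd_self hn b] using h.sinProd_div_pos hn hθ

theorem sinProd_a_succ_eq_zero (h : Interlaced N a b) (hn : n < N) :
    sinProd N a (a (n + 1)) = 0 := by
  rw [← neg_eq_zero, ← prod_sin_half_sub_succ (by omega) h.period]
  exact prod_eq_zero (mem_range.2 hn) (by simp)

theorem sinProd_b_mul_sinProd_b_neg (h : Interlaced N a b) (hn : n < N) :
    sinProd N b (a n) * sinProd N b (a (n + 1)) < 0 := by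
  have hle : a n ≤ a (n + 1) := h.a_le_a (Nat.le_succ n) hn
  have hl : ∀ i < N, |a n - b i| < 2 * π := fun _ => h.abs_sub_b_lt hn (left_mem_Icc.2 hle)
  have hr : ∀ i < N, |a (n + 1) - b i| < 2 * π :=
    fun _ => h.abs_sub_b_lt hn (right_mem_Icc.2 hle)
  rw [sinProd, sinProd, ← prod_mul_distrib]
  refine prod_neg_of_unique_neg (mem_range.2 hn) (sin_half_mul_sin_half_neg (hl n hn) (hr n hn)
    (mul_neg_of_neg_of_pos (by linarith [h.lt_b n hn]) (by linarith [h.b_lt n hn])))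
    fun i hi hin => sin_half_mul_sin_half_pos (hl i (mem_range.1 hi)) (hr i (mem_range.1 hi)) ?_
  rcases lt_or_gt_of_ne hin with hin | hni
  · have := h.b_lt_a hin hn.le
    exact mul_pos (by linarith) (by linarith)
  · have := h.a_lt_b hni (mem_range.1 hi)
    exact mul_pos_of_neg_of_neg (by linarith) (by linarith)

theorem exists_sinProd_div_eq (h : Interlaced N a b) (hn : n < N) (y : ℝ) :
    ∃ θ ∈ Ioo (a n) (a (n + 1)), sinProd N b θ / sinProd N a θ = y := by
  have hcont : Continuous fun θ => sinProd N b θ - y * sinProd N a θ := by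
    unfold sinProd
    fun_prop
  obtain ⟨θ, hθ, hzero⟩ := exists_mem_Ioo_eq_zero_of_mul_neg (h.a_le_a (Nat.le_succ n) hn)
    hcont.continuousOn (by
      simpa [sinProd_self hn a, h.sinProd_a_succ_eq_zero hn] using h.sinProd_b_mul_sinProd_b_neg hn)
  refine ⟨θ, hθ, ?_⟩
  rw [div_eq_iff (h.sinProd_ne_zero hn hθ)]
  linarith

end Interlaced

theorem stmt9_general (N : ℕ) (a b : ℕ → ℝ)
    (hab : ∀ i < N, a i < b i) (hba : ∀ i < N, b i < a (i + 1))
    (haN : a N = a 0 + 2 * π) :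
    ∀ n < N,
      (∀ θ ∈ Set.Ioo (a n) (a (n + 1)),
        (pFun N b (Complex.exp (θ * Complex.I)) /
          pFun N a (Complex.exp (θ * Complex.I))).im = 0) ∧
      StrictMonoOn (fun θ : ℝ =>
          (pFun N b (Complex.exp (θ * Complex.I)) /
            pFun N a (Complex.exp (θ * Complex.I))).re)
        (Set.Ioo (a n) (a (n + 1))) ∧
      (∀ y : ℝ, ∃ θ ∈ Set.Ioo (a n) (a (n + 1)),
        (pFun N b (Complex.exp (θ * Complex.I)) /
          pFun N a (Complex.exp (θ * Complex.I))).re = y) ∧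
      (∀ θ ∈ Set.Ioo (a n) (b n),
        (pFun N b (Complex.exp (θ * Complex.I)) /
          pFun N a (Complex.exp (θ * Complex.I))).re < 0) ∧
      pFun N b (Complex.exp ((b n : ℂ) * Complex.I)) /
        pFun N a (Complex.exp ((b n : ℂ) * Complex.I)) = 0 ∧
      (∀ θ ∈ Set.Ioo (b n) (a (n + 1)),
        0 < (pFun N b (Complex.exp (θ * Complex.I)) /
          pFun N a (Complex.exp (θ * Complex.I))).re) := by
  intro n hn
  have h : Interlaced N a b := ⟨hab, hba, haN⟩
  simp only [pFun_div_pFun_exp_mul_I, Complex.ofReal_re, Complex.ofReal_im]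
  exact ⟨fun _ _ => trivial, h.strictMonoOn_sinProd_div hn, h.exists_sinProd_div_eq hn,
    fun _ => h.sinProd_div_neg hn, by simp [sinProd_self hn b],
    fun _ => h.sinProd_div_pos hn⟩

/-- On each arc `(α_n, α_{n+1})` (with `α_{N+1} := α_1 + 2π`, here encoded by the
hypothesis `a N = a 0 + 2π`), the function `θ ↦ q(e^{iθ})/p(e^{iθ})` is
real-valued, strictly increasing, and maps the arc onto all of `ℝ`; it is
negative on `(α_n, β_n)`, zero at `β_n`, and positive on `(β_n, α_{n+1})`. -/
theorem stmt9 (N : ℕ) (hN : 1 ≤ N) (a b : ℕ → ℝ) (ha0 : 0 ≤ a 0)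
    (hab : ∀ i < N, a i < b i) (hba : ∀ i < N, b i < a (i + 1))
    (haN : a N = a 0 + 2 * π) :
    ∀ n < N,
      (∀ θ ∈ Set.Ioo (a n) (a (n + 1)),
        (pFun N b (Complex.exp (θ * Complex.I)) /
          pFun N a (Complex.exp (θ * Complex.I))).im = 0) ∧
      StrictMonoOn (fun θ : ℝ =>
          (pFun N b (Complex.exp (θ * Complex.I)) /
            pFun N a (Complex.exp (θ * Complex.I))).re)
        (Set.Ioo (a n) (a (n + 1))) ∧
      (∀ y : ℝ, ∃ θ ∈ Set.Ioo (a n) (a (n + 1)),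
        (pFun N b (Complex.exp (θ * Complex.I)) /
          pFun N a (Complex.exp (θ * Complex.I))).re = y) ∧
      (∀ θ ∈ Set.Ioo (a n) (b n),
        (pFun N b (Complex.exp (θ * Complex.I)) /
          pFun N a (Complex.exp (θ * Complex.I))).re < 0) ∧
      pFun N b (Complex.exp ((b n : ℂ) * Complex.I)) /
        pFun N a (Complex.exp ((b n : ℂ) * Complex.I)) = 0 ∧
      (∀ θ ∈ Set.Ioo (b n) (a (n + 1)),
        0 < (pFun N b (Complex.exp (θ * Complex.I)) /
          pFun N a (Complex.exp (θ * Complex.I))).re) :=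
  stmt9_general N a b hab hba haN
end
end

section
/- Let N ≥ 1 and let ψ_1 and ψ_2 be alternating step functions, each of order at most N (with positive heights in case of positive order, or a.e. constant in case of order 0). If ψ̂_1(n) = ψ̂_2(n) for all n = 0, 1, …, N, then ψ_1 = ψ_2 a.e. on 𝕋. -/
open MeasureTheory Complex Real AddCircle
open scoped Real

noncomputable section

/-- `ψ` is (a.e.) an alternating step function of height `c` and order `n ≥ 1`:
there are `t 0 < t 1 < ⋯ < t (2n-1) < t (2n) = t 0 + 2π` such that `ψ` takes the
value `(-1)^j * c` a.e. on the arc corresponding to `(t j, t (j+1))`. -/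
def IsAltStep (c : ℝ) (n : ℕ) (ψ : UnitCircle → ℂ) : Prop :=
  ∃ t : ℕ → ℝ, (∀ i < 2 * n, t i < t (i + 1)) ∧ t (2 * n) = t 0 + 2 * π ∧
    ∀ j < 2 * n, ∀ᵐ (θ : ℝ) ∂(volume : Measure ℝ),
      θ ∈ Set.Ioo (t j) (t (j + 1)) → ψ (θ : UnitCircle) = ((-1) ^ j * c : ℝ)

/-- `ψ` is an alternating step function of order at most `N`: either a.e. constant
(order `0`, its height being the constant value), or of some positive height and
order `n` with `1 ≤ n ≤ N`. -/
def IsAltStepLE (N : ℕ) (ψ : UnitCircle → ℂ) : Prop :=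
  (∃ c : ℝ, ∀ᵐ x ∂haarAddCircle, ψ x = (c : ℂ)) ∨
  (∃ c : ℝ, 0 < c ∧ ∃ n, 1 ≤ n ∧ n ≤ N ∧ IsAltStep c n ψ)

/-!
Each function is a.e. `c • sign P` for a real trigonometric polynomial `P` of degree at most its
order `n`: for an alternating step function with nodes `t₁, …, t₂ₙ` take
`P θ = ∏ sin ((tᵢ - θ) / 2)`, which changes sign exactly at the nodes; for a constant take `P`
constant. Let `ψ₁ = c₁ • sign P` be the function of larger height. The Fourier coefficients of the
real function `ψ₁ - ψ₂` of index `|m| ≤ n` vanish (those of negative index by conjugate symmetry),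
so `∫ (ψ₁ - ψ₂) P = 0`. But `(ψ₁ - ψ₂) P = c₁ |P| - ψ₂ P ≥ 0`, hence `ψ₁ = ψ₂` wherever `P ≠ 0`,
that is, almost everywhere.
-/

open Finset
open scoped ComplexConjugate

section AddCircle

variable {T : ℝ} [Fact (0 < T)]

theorem AddCircle.ae_haarAddCircle_of_ae_restrict_Ioc (a : ℝ) {p : AddCircle T → Prop}
    (h : ∀ᵐ θ : ℝ ∂volume.restrict (Set.Ioc a (a + T)), p θ) : ∀ᵐ x ∂haarAddCircle, p x := by
  have hmp : MeasurePreserving (fun x => (equivIoc T a x : ℝ)) volume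
      (volume.restrict (Set.Ioc a (a + T))) :=
    (measurePreserving_subtype_coe measurableSet_Ioc).comp (measurePreserving_equivIoc T)
  have hT : ENNReal.ofReal T ≠ 0 := (ENNReal.ofReal_pos.2 (Fact.out : 0 < T)).ne'
  have := hmp.quasiMeasurePreserving.ae h
  simp only [coe_equivIoc, volume_eq_smul_haarAddCircle] at this
  exact (Measure.absolutelyContinuous_smul hT).ae_le this

theorem fourierCoeff_sub {f g : AddCircle T → ℂ} (hf : Integrable f haarAddCircle)
    (hg : Integrable g haarAddCircle) (m : ℤ) :
    fourierCoeff (fun x => f x - g x) m = fourierCoeff f m - fourierCoeff g m := by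
  simp_rw [fourierCoeff, smul_sub]
  exact integral_sub (hf.fourier_smul _) (hg.fourier_smul _)

theorem fourierCoeff_ofReal_neg (w : AddCircle T → ℝ) (m : ℤ) :
    fourierCoeff (fun x => (w x : ℂ)) (-m) = conj (fourierCoeff (fun x => (w x : ℂ)) m) := by
  simp_rw [fourierCoeff, ← integral_conj, smul_eq_mul, map_mul, conj_ofReal, ← fourier_neg]

end AddCircle

def IsRealTrigPoly (n : ℕ) (P : UnitCircle → ℝ) : Prop :=
  ∃ A : ℕ → ℂ, ∀ x, (P x : ℂ) = ∑ k ∈ range (2 * n + 1), A k * fourier ((k : ℤ) - n) x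

namespace IsRealTrigPoly

variable {n : ℕ} {P : UnitCircle → ℝ}

theorem continuous (hP : IsRealTrigPoly n P) : Continuous P := by
  obtain ⟨A, hA⟩ := hP
  have : P = fun x => (∑ k ∈ range (2 * n + 1), A k * fourier ((k : ℤ) - n) x).re := by
    ext x; rw [← hA, ofReal_re]
  rw [this]
  fun_prop

theorem integral_mul_eq_zero (hP : IsRealTrigPoly n P) {w : UnitCircle → ℝ}
    (hw : Integrable w haarAddCircle)
    (hcoef : ∀ k : ℕ, k ≤ n → fourierCoeff (fun x => (w x : ℂ)) k = 0) :
    ∫ x, w x * P x ∂haarAddCircle = 0 := by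
  obtain ⟨A, hA⟩ := hP
  have hvanish : ∀ m : ℤ, |m| ≤ n → fourierCoeff (fun x => (w x : ℂ)) m = 0 := by
    intro m hm
    obtain ⟨k, rfl | rfl⟩ := Int.eq_nat_or_neg m
    · exact hcoef k (by simpa using hm)
    · rw [fourierCoeff_ofReal_neg, hcoef k (by simpa using hm), map_zero]
  have hw' : Integrable (fun x => (w x : ℂ)) haarAddCircle := hw.ofReal
  apply Complex.ofReal_injective
  calc ((∫ x, w x * P x ∂haarAddCircle : ℝ) : ℂ)
      = ∫ x, (w x : ℂ) * ∑ k ∈ range (2 * n + 1), A k * fourier ((k : ℤ) - n) x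
          ∂haarAddCircle := by
        rw [← integral_complex_ofReal]; simp_rw [ofReal_mul, hA]
    _ = ∑ k ∈ range (2 * n + 1), A k * fourierCoeff (fun x => (w x : ℂ)) (n - k) := by
        simp_rw [mul_sum]
        rw [integral_finsetSum _ fun k _ => ((hw'.fourier_smul _).const_mul (A k)).congr
          (.of_forall fun x => by simp only [smul_eq_mul]; ring)]
        refine sum_congr rfl fun k _ => ?_
        rw [fourierCoeff, ← integral_const_mul]
        congr 1 with x
        rw [neg_sub, smul_eq_mul]; ring
    _ = 0 := sum_eq_zero fun k hk => by
        rw [hvanish _ (by rw [abs_le]; have := mem_range.1 hk; omega), mul_zero]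

end IsRealTrigPoly

theorem SignType.abs_coe_le_one (s : SignType) : |(s : ℝ)| ≤ 1 := by
  cases s <;> simp

theorem IsRealTrigPoly.measurable_sign {n : ℕ} {P : UnitCircle → ℝ} (hP : IsRealTrigPoly n P) :
    Measurable fun x => (SignType.sign (P x) : ℝ) := by
  have hmono : Monotone fun r : ℝ => (SignType.sign r : ℝ) := fun a b hab => by
    rcases lt_trichotomy a 0 with ha | ha | ha <;> rcases lt_trichotomy b 0 with hb | hb | hb <;>
      simp [sign_pos, ha, hb] <;> linarith
  exact hmono.measurable.comp hP.continuous.measurable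

theorem ae_eq_of_fourierCoeff_eq {n : ℕ} {c : ℝ} {P v : UnitCircle → ℝ}
    (hP : IsRealTrigPoly n P) (hP0 : ∀ᵐ x ∂haarAddCircle, P x ≠ 0)
    (hvm : AEStronglyMeasurable v haarAddCircle) (hvc : ∀ᵐ x ∂haarAddCircle, |v x| ≤ c)
    (hcoef : ∀ k : ℕ, k ≤ n → fourierCoeff (fun x => ((c * SignType.sign (P x) : ℝ) : ℂ)) k =
      fourierCoeff (fun x => (v x : ℂ)) k) :
    (fun x => c * (SignType.sign (P x) : ℝ)) =ᵐ[haarAddCircle] v := by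
  set u : UnitCircle → ℝ := fun x => c * SignType.sign (P x)
  have hPc := hP.continuous
  have hu : Integrable u haarAddCircle :=
    .of_bound (hP.measurable_sign.const_mul c).aestronglyMeasurable |c| (.of_forall fun x => by
      rw [Real.norm_eq_abs, abs_mul]
      exact mul_le_of_le_one_right (abs_nonneg c) (SignType.abs_coe_le_one _))
  have hv : Integrable v haarAddCircle :=
    .of_bound hvm c (hvc.mono fun x hx => by rwa [Real.norm_eq_abs])
  have hw : ∀ k : ℕ, k ≤ n → fourierCoeff (fun x => ((u x - v x : ℝ) : ℂ)) k = 0 := by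
    intro k hk
    simp_rw [ofReal_sub]
    exact (fourierCoeff_sub hu.ofReal hv.ofReal k).trans (sub_eq_zero.2 (hcoef k hk))
  have horth := hP.integral_mul_eq_zero (hu.sub hv) hw
  have hnonneg : 0 ≤ᵐ[haarAddCircle] fun x => (u x - v x) * P x := by
    filter_upwards [hvc] with x hx
    have h1 : u x * P x = c * |P x| := by rw [mul_assoc, sign_mul_self]
    have h2 : v x * P x ≤ c * |P x| :=
      (le_abs_self _).trans (by rw [abs_mul]; exact mul_le_mul_of_nonneg_right hx (abs_nonneg _))
    simp only [Pi.zero_apply, sub_mul]; linarith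
  have hint : Integrable (fun x => (u x - v x) * P x) haarAddCircle :=
    (hu.sub hv).mul_bdd hPc.aestronglyMeasurable
      (.of_forall fun x => ContinuousMap.norm_coe_le_norm (⟨P, hPc⟩ : C(UnitCircle, ℝ)) x)
  filter_upwards [(integral_eq_zero_iff_of_nonneg_ae hnonneg hint).1 horth, hP0] with x hx hPx
  exact sub_eq_zero.1 ((mul_eq_zero.1 hx).resolve_right hPx)

def IsSignOfTrigPoly (n : ℕ) (c : ℝ) (ψ : UnitCircle → ℂ) : Prop :=
  0 ≤ c ∧ ∃ P : UnitCircle → ℝ, IsRealTrigPoly n P ∧ (∀ᵐ x ∂haarAddCircle, P x ≠ 0) ∧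
    ψ =ᵐ[haarAddCircle] fun x => ((c * SignType.sign (P x) : ℝ) : ℂ)

theorem IsSignOfTrigPoly.ae_eq {n m : ℕ} {c₁ c₂ : ℝ} {ψ₁ ψ₂ : UnitCircle → ℂ}
    (h₁ : IsSignOfTrigPoly n c₁ ψ₁) (h₂ : IsSignOfTrigPoly m c₂ ψ₂) (hc : c₂ ≤ c₁)
    (hcoef : ∀ k : ℕ, k ≤ n → fourierCoeff ψ₁ k = fourierCoeff ψ₂ k) :
    ψ₁ =ᵐ[haarAddCircle] ψ₂ := by
  obtain ⟨-, P₁, hP₁, hP₁0, hψ₁⟩ := h₁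
  obtain ⟨hc₂, P₂, hP₂, -, hψ₂⟩ := h₂
  have hv : ∀ᵐ x ∂haarAddCircle, |c₂ * (SignType.sign (P₂ x) : ℝ)| ≤ c₁ := .of_forall fun x => by
    rw [abs_mul, abs_of_nonneg hc₂]
    exact (mul_le_of_le_one_right hc₂ (SignType.abs_coe_le_one _)).trans hc
  have key := ae_eq_of_fourierCoeff_eq hP₁ hP₁0
    (hP₂.measurable_sign.const_mul c₂).aestronglyMeasurable hv
    (fun k hk => by rw [← fourierCoeff_congr_ae hψ₁, ← fourierCoeff_congr_ae hψ₂, hcoef k hk])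
  filter_upwards [hψ₁, hψ₂, key] with x h₁ h₂ h
  rw [h₁, h₂, h]

theorem isSignOfTrigPoly_of_ae_eq_const {ψ : UnitCircle → ℂ} {c : ℝ}
    (h : ∀ᵐ x ∂haarAddCircle, ψ x = (c : ℂ)) : IsSignOfTrigPoly 0 |c| ψ := by
  set p : ℝ := if c = 0 then 1 else c
  have hp : p ≠ 0 := by unfold p; split_ifs with hc; exacts [one_ne_zero, hc]
  have hcp : |c| * (SignType.sign p : ℝ) = c := by unfold p; split_ifs with hc <;> simp [hc]
  refine ⟨abs_nonneg c, fun _ => p, ⟨fun _ => p, fun x => by simp⟩, .of_forall fun _ => hp, ?_⟩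
  filter_upwards [h] with x hx
  rw [hx, hcp]

theorem fourier_coe_eq_exp (m : ℤ) (θ : ℝ) : fourier m (θ : UnitCircle) = exp (m * θ * I) := by
  rw [fourier_coe_apply]
  congr 1
  field_simp [ofReal_ne_zero.2 Real.pi_ne_zero]
  push_cast
  ring

open Polynomial in
theorem isRealTrigPoly_liftIoc_prod_sin (a : ℝ) (s : ℕ → ℝ) (n : ℕ) :
    IsRealTrigPoly n
      (liftIoc (2 * π) a fun θ => ∏ i ∈ range (2 * n), Real.sin ((s i - θ) / 2)) := by
  -- `sin ((s - θ) / 2) = e^{-iθ/2} (β e^{iθ} + α)`, so the product is `e^{-inθ} Q (e^{iθ})`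
  set Q : ℂ[X] := ∏ i ∈ range (2 * n),
    (C (exp (-s i * I / 2) * I / 2) * X + C (-exp (s i * I / 2) * I / 2))
  have hQ : Q.natDegree < 2 * n + 1 := Nat.lt_succ_of_le <|
    (natDegree_prod_le _ _).trans ((sum_le_sum fun _ _ => natDegree_linear_le).trans (by simp))
  suffices key : ∀ θ : ℝ, ((∏ i ∈ range (2 * n), Real.sin ((s i - θ) / 2) : ℝ) : ℂ) =
      ∑ k ∈ range (2 * n + 1), Q.coeff k * fourier ((k : ℤ) - n) (θ : UnitCircle) by
    refine ⟨Q.coeff, fun x => ?_⟩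
    have := key (equivIoc (2 * π) a x)
    rwa [coe_equivIoc] at this
  intro θ
  set w := exp (-θ * I / 2)
  set z := exp (θ * I)
  have hsin : ∀ r : ℝ, ((Real.sin ((r - θ) / 2) : ℝ) : ℂ) =
      w * (exp (-r * I / 2) * I / 2 * z + -exp (r * I / 2) * I / 2) := by
    intro r
    have e1 : exp (-(((r - θ) / 2 : ℝ) : ℂ) * I) = exp (-r * I / 2) * z * w := by
      rw [← Complex.exp_add, ← Complex.exp_add]; congr 1; push_cast; ring
    have e2 : exp ((((r - θ) / 2 : ℝ) : ℂ) * I) = exp (r * I / 2) * w := by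
      rw [← Complex.exp_add]; congr 1; push_cast; ring
    rw [ofReal_sin, Complex.sin, e1, e2]
    ring
  have hpow : ∀ k : ℕ, w ^ (2 * n) * z ^ k = fourier ((k : ℤ) - n) (θ : UnitCircle) := by
    intro k
    rw [fourier_coe_eq_exp, ← Complex.exp_nat_mul, ← Complex.exp_nat_mul, ← Complex.exp_add]
    congr 1; push_cast; ring
  calc ((∏ i ∈ range (2 * n), Real.sin ((s i - θ) / 2) : ℝ) : ℂ)
      = w ^ (2 * n) * Q.eval z := by
        simp [Q, eval_prod, hsin, prod_mul_distrib]
    _ = _ := by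
        rw [eval_eq_sum_range' hQ, mul_sum]
        exact sum_congr rfl fun k _ => by rw [← hpow]; ring

theorem exists_mem_Ico_of_le_of_lt {α : Type*} [LinearOrder α] {t : ℕ → α} {M : ℕ} {θ : α}
    (h0 : t 0 ≤ θ) (hM : θ < t M) : ∃ j < M, θ ∈ Set.Ico (t j) (t (j + 1)) := by
  classical
  have hex : ∃ k, θ < t k := ⟨M, hM⟩
  obtain ⟨j, hj⟩ : ∃ j, Nat.find hex = j + 1 :=
    Nat.exists_eq_succ_of_ne_zero fun h => (Nat.find_spec hex).not_ge (h ▸ h0)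
  refine ⟨j, ?_, not_lt.1 (Nat.find_min hex (by omega)), hj ▸ Nat.find_spec hex⟩
  have := Nat.find_min' hex hM
  omega

theorem sign_prod_sin_of_mem_Ioo {t : ℕ → ℝ} {M j : ℕ} (ht : ∀ i < M, t i < t (i + 1))
    (hper : t M = t 0 + 2 * π) (hj : j < M) {θ : ℝ} (hθ : θ ∈ Set.Ioo (t j) (t (j + 1))) :
    SignType.sign (∏ i ∈ range M, Real.sin ((t (i + 1) - θ) / 2)) = (-1) ^ j := by
  have hmono : MonotoneOn t (Set.Iic M) :=
    (strictMonoOn_Iic_of_lt_succ fun i hi => by simpa using ht i hi).monotoneOn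
  have hle : ∀ {i k : ℕ}, i ≤ k → k ≤ M → t i ≤ t k := fun hik hk =>
    hmono (Set.mem_Iic.2 (hik.trans hk)) (Set.mem_Iic.2 hk) hik
  have hneg : ∀ i ∈ range j, SignType.sign (Real.sin ((t (i + 1) - θ) / 2)) = -1 := by
    intro i hi
    have := mem_range.1 hi
    have h1 := hle (i := i + 1) (k := j) (by omega) hj.le
    have h2 := hle (i := 0) (k := i + 1) (by omega) (by omega)
    have h3 := hle (i := j + 1) (k := M) hj le_rfl
    exact sign_neg (Real.sin_neg_of_neg_of_neg_pi_lt (by linarith [hθ.1]) (by linarith [hθ.2]))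
  have hpos : ∀ i ∈ Ico j M, SignType.sign (Real.sin ((t (i + 1) - θ) / 2)) = 1 := by
    intro i hi
    have := mem_Ico.1 hi
    have h1 := hle (i := j + 1) (k := i + 1) (by omega) (by omega)
    have h2 := hle (i := i + 1) (k := M) (by omega) le_rfl
    have h3 := hle (i := 0) (k := j) (by omega) hj.le
    exact sign_pos (Real.sin_pos_of_pos_of_lt_pi (by linarith [hθ.2]) (by linarith [hθ.1]))
  rw [show SignType.sign (∏ i ∈ range M, Real.sin ((t (i + 1) - θ) / 2)) =
      ∏ i ∈ range M, SignType.sign (Real.sin ((t (i + 1) - θ) / 2)) from map_prod signHom _ _,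
    ← prod_range_mul_prod_Ico _ hj.le, prod_congr rfl hneg, prod_congr rfl hpos]
  simp

theorem IsAltStep.isSignOfTrigPoly {c : ℝ} {n : ℕ} {ψ : UnitCircle → ℂ} (hc : 0 ≤ c)
    (h : IsAltStep c n ψ) : IsSignOfTrigPoly n c ψ := by
  obtain ⟨t, ht, hper, harc⟩ := h
  set P := liftIoc (2 * π) (t 0) fun θ => ∏ i ∈ range (2 * n), Real.sin ((t (i + 1) - θ) / 2)
  have hae : ∀ᵐ θ : ℝ ∂volume.restrict (Set.Ioc (t 0) (t 0 + 2 * π)),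
      P θ ≠ 0 ∧ ψ θ = ((c * SignType.sign (P θ) : ℝ) : ℂ) := by
    filter_upwards [ae_restrict_mem measurableSet_Ioc,
      ae_restrict_of_ae ((Set.countable_range t).ae_notMem volume),
      ae_restrict_of_ae ((Filter.eventually_all_finset (range (2 * n))).2 fun j hj =>
        harc j (mem_range.1 hj))] with θ hθ hnode harcs
    have hne : ∀ i, θ ≠ t i := fun i h => hnode ⟨i, h.symm⟩
    obtain ⟨j, hj, hθj⟩ := exists_mem_Ico_of_le_of_lt hθ.1.le
      (lt_of_le_of_ne (hper ▸ hθ.2) (hne _))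
    have hθj' : θ ∈ Set.Ioo (t j) (t (j + 1)) := ⟨lt_of_le_of_ne hθj.1 (hne j).symm, hθj.2⟩
    have hsign := sign_prod_sin_of_mem_Ioo ht hper hj hθj'
    simp only [P, liftIoc_coe_apply hθ]
    refine ⟨sign_ne_zero.1 (by simp [hsign]), ?_⟩
    rw [harcs j (mem_range.2 hj) hθj', hsign]
    simp [mul_comm]
  exact ⟨hc, P, isRealTrigPoly_liftIoc_prod_sin _ _ _,
    ae_haarAddCircle_of_ae_restrict_Ioc _ (hae.mono fun _ h => h.1),
    ae_haarAddCircle_of_ae_restrict_Ioc _ (hae.mono fun _ h => h.2)⟩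

theorem IsAltStepLE.exists_isSignOfTrigPoly {N : ℕ} {ψ : UnitCircle → ℂ} (h : IsAltStepLE N ψ) :
    ∃ n ≤ N, ∃ c, IsSignOfTrigPoly n c ψ := by
  rcases h with ⟨c, hc⟩ | ⟨c, hc, n, -, hnN, h⟩
  · exact ⟨0, N.zero_le, |c|, isSignOfTrigPoly_of_ae_eq_const hc⟩
  · exact ⟨n, hnN, c, h.isSignOfTrigPoly hc.le⟩

theorem stmt12_general (N : ℕ) (ψ₁ ψ₂ : UnitCircle → ℂ)
    (h₁ : IsAltStepLE N ψ₁) (h₂ : IsAltStepLE N ψ₂)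
    (hcoef : ∀ n : ℕ, n ≤ N → fourierCoeff ψ₁ (n : ℤ) = fourierCoeff ψ₂ (n : ℤ)) :
    ψ₁ =ᵐ[haarAddCircle] ψ₂ := by
  obtain ⟨n₁, hn₁, c₁, hψ₁⟩ := h₁.exists_isSignOfTrigPoly
  obtain ⟨n₂, hn₂, c₂, hψ₂⟩ := h₂.exists_isSignOfTrigPoly
  rcases le_total c₂ c₁ with hc | hc
  · exact hψ₁.ae_eq hψ₂ hc fun k hk => hcoef k (hk.trans hn₁)
  · exact (hψ₂.ae_eq hψ₁ hc fun k hk => (hcoef k (hk.trans hn₂)).symm).symm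

/-- An alternating step function of order at most `N` is determined (a.e.) by its
Fourier coefficients of indices `0, 1, …, N`. -/
theorem stmt12 (N : ℕ) (hN : 1 ≤ N) (ψ₁ ψ₂ : UnitCircle → ℂ)
    (h₁ : IsAltStepLE N ψ₁) (h₂ : IsAltStepLE N ψ₂)
    (hcoef : ∀ n : ℕ, n ≤ N → fourierCoeff ψ₁ (n : ℤ) = fourierCoeff ψ₂ (n : ℤ)) :
    ψ₁ =ᵐ[haarAddCircle] ψ₂ :=
  stmt12_general N ψ₁ ψ₂ h₁ h₂ hcoef
end
end

section
/- Let f ∈ L^∞(𝕋), let N ≥ 1 and let k be a positive integer, and define g ∈ L^∞(𝕋) by g(e^{iθ}) = f(e^{ikθ}). Then ‖A_{f,N}‖ = ‖A_{g,kN}‖. -/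
open MeasureTheory Complex Real AddCircle
open scoped Real

noncomputable section

/-- The `L^∞` norm of a function on the circle. -/
def supNorm (f : UnitCircle → ℂ) : ℝ := (eLpNorm f ⊤ haarAddCircle).toReal

/-- `f ∈ G_A`: `f ∈ L^∞(𝕋)` and `f̂(n) = a n` for `-N ≤ n ≤ N`. -/
def inGA (N : ℕ) (a : ℤ → ℂ) (f : UnitCircle → ℂ) : Prop :=
  MemLp f ⊤ haarAddCircle ∧ ∀ n : ℤ, |n| ≤ (N : ℤ) → fourierCoeff f n = a n

/-- `c_A = inf {‖f‖_∞ : f ∈ G_A}`. -/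
def cA (N : ℕ) (a : ℤ → ℂ) : ℝ := sInf (supNorm '' {f | inGA N a f})

/-! Write `g = f ∘ (k • ·)`. Since `x ↦ k • x` preserves Haar measure, `ĝ(km) = f̂(m)`, and
since `g` is invariant under translation by `2π/k`, `ĝ(n) = 0` for `k ∤ n`. Hence `A_{f,N}` is the
principal submatrix of `A_{g,kN}` on the indices divisible by `k`, while `A_{g,kN}`, with its
indices sorted by residue mod `k`, is a principal submatrix of `diag(A_{f,N}, …, A_{f,N})`. Passing
to a principal submatrix does not increase the operator norm, and neither does the
`⋆`-homomorphism `A ↦ diag(A, …, A)` of C⋆-algebras. -/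

namespace AddCircle
variable {T : ℝ} {E : Type*} [NormedAddCommGroup E] [NormedSpace ℂ E]

lemma fourier_apply_add (n : ℤ) (x c : AddCircle T) :
    fourier n (x + c) = fourier n x * fourier n c := by
  simp only [fourier_apply, smul_add, toCircle_add, Circle.coe_mul]

variable [Fact (0 < T)]

lemma fourierCoeff_eq_zero_of_add_eq_self {h : AddCircle T → E} {c : AddCircle T}
    (hc : ∀ x, h (x + c) = h x) {n : ℤ} (hn : ¬ (addOrderOf c : ℤ) ∣ n) :
    fourierCoeff h n = 0 := by
  have hfix : fourierCoeff h n = fourier (-n) c • fourierCoeff h n := by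
    simp only [fourierCoeff, ← integral_smul]
    rw [← integral_add_right_eq_self _ c]
    congr 1 with x
    rw [hc, fourier_apply_add, mul_comm, ← smul_smul]
  have hne : fourier (-n) c ≠ 1 := by
    intro h1
    apply hn
    rw [addOrderOf_dvd_iff_zsmul_eq_zero, ← neg_eq_zero, ← neg_smul]
    apply injective_toCircle (Fact.out : 0 < T).ne'
    ext
    simpa [fourier_apply] using h1
  have hzero : (1 - fourier (-n) c) • fourierCoeff h n = 0 := by
    rw [sub_smul, one_smul, ← hfix, sub_self]
  exact (smul_eq_zero.mp hzero).resolve_left (sub_ne_zero.mpr (Ne.symm hne))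

lemma fourierCoeff_comp_nsmul_of_not_dvd (f : AddCircle T → E) {k : ℕ} (hk : 0 < k) {n : ℤ}
    (hn : ¬ (k : ℤ) ∣ n) : fourierCoeff (fun x => f (k • x)) n = 0 := by
  refine fourierCoeff_eq_zero_of_add_eq_self (c := ((T / k : ℝ) : AddCircle T)) (fun x => ?_) ?_
  · rw [nsmul_add, ← coe_nsmul, nsmul_eq_mul, mul_div_cancel₀ _ (by positivity), coe_period,
      add_zero]
  · rwa [addOrderOf_period_div hk]

lemma fourierCoeff_comp_nsmul_mul (f : AddCircle T → E) (hf : AEStronglyMeasurable f haarAddCircle)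
    {k : ℕ} (hk : 0 < k) (m : ℤ) :
    fourierCoeff (fun x => f (k • x)) (k * m) = fourierCoeff f m := by
  have hmp : MeasurePreserving (fun x : AddCircle T => k • x) haarAddCircle haarAddCircle := by
    simpa only [natCast_zsmul] using
      Measure.measurePreserving_zsmul haarAddCircle (Int.natCast_ne_zero.mpr hk.ne')
  have hchar : ∀ x : AddCircle T, fourier (-(k * m)) x = fourier (-m) (k • x) := fun x => by
    rw [fourier_apply, fourier_apply, ← natCast_zsmul, smul_smul, neg_mul, mul_comm]
  have hmeas : AEStronglyMeasurable (fun y => fourier (-m) y • f y)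
      (Measure.map (fun x : AddCircle T => k • x) haarAddCircle) :=
    hmp.map_eq.symm ▸ (fourier (-m)).continuous.aestronglyMeasurable.smul hf
  simp only [fourierCoeff, hchar]
  rw [← integral_map hmp.measurable.aemeasurable hmeas, hmp.map_eq]

end AddCircle

open Matrix
open scoped Matrix.Norms.L2Operator

namespace Matrix

variable {l m n o : Type*} [Fintype l] [Fintype m] [Fintype n] [Fintype o]
  [DecidableEq l] [DecidableEq m] [DecidableEq n] [DecidableEq o]

def blockDiagonalConstStarAlgHom :
    Matrix n n ℂ →⋆ₐ[ℂ] Matrix (n × o) (n × o) ℂ where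
  toFun A := blockDiagonal fun _ => A
  map_one' := blockDiagonal_one
  map_mul' A B := blockDiagonal_mul (fun _ => A) (fun _ => B)
  map_zero' := blockDiagonal_zero
  map_add' A B := blockDiagonal_add (fun _ => A) (fun _ => B)
  commutes' c := by simp [algebraMap_eq_diagonal, blockDiagonal_diagonal]
  map_star' A := (blockDiagonal_conjTranspose _).symm

lemma l2_opNorm_blockDiagonal_const_le (A : Matrix n n ℂ) :
    ‖(blockDiagonal fun _ : o => A)‖ ≤ ‖A‖ := by
  exact NonUnitalStarAlgHom.norm_apply_le (blockDiagonalConstStarAlgHom (o := o)) A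

lemma l2_opNorm_one_le : ‖(1 : Matrix l l ℂ)‖ ≤ 1 := by
  rw [← l2_opNorm_toEuclideanCLM, map_one]
  exact ContinuousLinearMap.norm_id_le

lemma l2_opNorm_submatrix_le (A : Matrix m m ℂ) {e : l → m} (he : Function.Injective e) :
    ‖A.submatrix e e‖ ≤ ‖A‖ := by
  set P : Matrix m l ℂ := (1 : Matrix m m ℂ).submatrix id e
  have hPstar : Pᴴ = (1 : Matrix m m ℂ).submatrix e id := by
    rw [conjTranspose_submatrix, conjTranspose_one]
  have hA : A.submatrix e e = Pᴴ * A * P := by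
    rw [hPstar]
    ext i j
    simp [P, mul_apply, one_apply]
  have hP : ‖P‖ * ‖P‖ ≤ 1 := by
    have hPP : Pᴴ * P = 1 := by
      rw [hPstar, ← submatrix_mul _ _ _ _ _ Function.bijective_id, Matrix.one_mul,
        submatrix_one e he]
    rw [← l2_opNorm_conjTranspose_mul_self, hPP]
    exact l2_opNorm_one_le
  calc ‖A.submatrix e e‖ = ‖Pᴴ * A * P‖ := by rw [hA]
    _ ≤ ‖Pᴴ‖ * ‖A‖ * ‖P‖ :=
      (l2_opNorm_mul _ _).trans (mul_le_mul_of_nonneg_right (l2_opNorm_mul _ _) (norm_nonneg _))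
    _ = ‖P‖ * ‖P‖ * ‖A‖ := by rw [l2_opNorm_conjTranspose]; ring
    _ ≤ ‖A‖ := mul_le_of_le_one_left (norm_nonneg A) hP

end Matrix

section Toeplitz

variable {N k : ℕ} {a b : ℤ → ℂ}

lemma l2_opNorm_toeplitz_le_toeplitz_mul (hk : 0 < k) (hab : ∀ m : ℤ, b (k * m) = a m) :
    ‖toeplitz N a‖ ≤ ‖toeplitz (k * N) b‖ := by
  let e : Fin (N + 1) → Fin (k * N + 1) := fun j => ⟨k * j, by
    have := Nat.mul_le_mul_left k (Nat.lt_succ_iff.mp j.2); omega⟩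
  have he : Function.Injective e := fun i j hij =>
    Fin.ext (Nat.eq_of_mul_eq_mul_left hk (congrArg Fin.val hij))
  convert l2_opNorm_submatrix_le (toeplitz (k * N) b) he using 2
  ext i j
  simp only [toeplitz, submatrix_apply, e]
  rw [← hab]
  congr 1
  push_cast
  ring

lemma l2_opNorm_toeplitz_mul_le_toeplitz (hk : 0 < k) (hab : ∀ m : ℤ, b (k * m) = a m)
    (hb : ∀ n : ℤ, ¬ (k : ℤ) ∣ n → b n = 0) :
    ‖toeplitz (k * N) b‖ ≤ ‖toeplitz N a‖ := by
  let e : Fin (k * N + 1) → Fin (N + 1) × Fin k :=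
    finProdFinEquiv.symm ∘ Fin.castLE (by nlinarith)
  have he : Function.Injective e := finProdFinEquiv.symm.injective.comp (Fin.castLE_injective _)
  have hblock : toeplitz (k * N) b = (blockDiagonal fun _ : Fin k => toeplitz N a).submatrix e e := by
    ext m l
    simp only [toeplitz, submatrix_apply, blockDiagonal_apply, e, Function.comp_apply,
      finProdFinEquiv_symm_apply, Fin.ext_iff, Fin.coe_modNat, Fin.coe_divNat, Fin.val_castLE]
    split_ifs with hml
    · rw [← hab]
      congr 1
      have hm := Nat.div_add_mod m k
      have hl := Nat.div_add_mod l k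
      zify at hm hl hml ⊢
      linear_combination hl - hm + hml
    · exact hb _ fun hdvd => hml (Nat.modEq_iff_dvd.mpr hdvd).symm
  calc ‖toeplitz (k * N) b‖ ≤ ‖blockDiagonal fun _ : Fin k => toeplitz N a‖ :=
        hblock ▸ l2_opNorm_submatrix_le _ he
    _ ≤ ‖toeplitz N a‖ := l2_opNorm_blockDiagonal_const_le _

end Toeplitz

theorem stmt16_general (f : UnitCircle → ℂ) (hf : MemLp f ⊤ haarAddCircle)
    (N k : ℕ) (hk : 1 ≤ k) (g : UnitCircle → ℂ)
    (hg : ∀ θ : ℝ, g (θ : UnitCircle) = f ((k * θ : ℝ) : UnitCircle)) :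
    opNorm (toeplitz N fun n => fourierCoeff f n) =
      opNorm (toeplitz (k * N) fun n => fourierCoeff g n) := by
  obtain rfl : g = fun x => f (k • x) := funext fun x => by
    induction x using QuotientAddGroup.induction_on with
    | H θ => rw [hg θ, ← coe_nsmul, nsmul_eq_mul]
  have hab (m : ℤ) : fourierCoeff (fun x => f (k • x)) (k * m) = fourierCoeff f m :=
    fourierCoeff_comp_nsmul_mul f hf.aestronglyMeasurable hk m
  exact le_antisymm (l2_opNorm_toeplitz_le_toeplitz_mul hk hab)
    (l2_opNorm_toeplitz_mul_le_toeplitz hk hab fun _ => fourierCoeff_comp_nsmul_of_not_dvd f hk)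

/-- If `g(e^{iθ}) = f(e^{ikθ})`, then the compressions `A_{f,N}` and `A_{g,kN}`
have the same operator norm. -/
theorem stmt16 (f : UnitCircle → ℂ) (hf : MemLp f ⊤ haarAddCircle)
    (N k : ℕ) (hN : 1 ≤ N) (hk : 1 ≤ k) (g : UnitCircle → ℂ)
    (hg : ∀ θ : ℝ, g (θ : UnitCircle) = f ((k * θ : ℝ) : UnitCircle)) :
    opNorm (toeplitz N fun n => fourierCoeff f n) =
      opNorm (toeplitz (k * N) fun n => fourierCoeff g n) :=
  stmt16_general f hf N k hk g hg
end
end
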